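/- Let K be an abstract simplicial complex on the vertex set [m], and regard Δ(K) as a simplicial space with each Δ(K)_n discrete. Then for each n ≥ 0, the suspension of Δ(K)_n splits: there is a homotopy equivalence Σ(Δ(K)_n) → ⋁_{0 ≤ r ≤ n} ⋁_J Σ(ŝ_J(Δ(K)_{n−r})), where J ranges over all admissible sequences with |J| = r. -/

import Mathlib

universe u v

/-- An NDR pair `(Z, A)`, in the sense of May. -/
def IsNDRPair {Z : Type u} [TopologicalSpace Z] (A : Set Z) : Prop :=
  ∃ (u : C(Z, unitInterval)) (h : C(Z × unitInterval, Z)),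
    A = u ⁻¹' {0} ∧ (∀ z, h (z, 0) = z) ∧ (∀ a ∈ A, ∀ t, h (a, t) ∈ A) ∧
    ∀ z, u z < 1 → h (z, 1) ∈ A

/-- A strong NDR pair `(Z, A)`, in the sense of May. -/
def IsStrongNDRPair {Z : Type u} [TopologicalSpace Z] (A : Set Z) : Prop :=
  ∃ (u : C(Z, unitInterval)) (h : C(Z × unitInterval, Z)),
    A = u ⁻¹' {0} ∧ (∀ z, h (z, 0) = z) ∧ (∀ a ∈ A, ∀ t, h (a, t) ∈ A) ∧
    (∀ z, u z < 1 → h (z, 1) ∈ A) ∧ ∀ z t, u z < 1 → u (h (z, t)) < 1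

/-- A cofibration: a map having the homotopy extension property with respect to all spaces. -/
def IsCofibration {A X : Type u} [TopologicalSpace A] [TopologicalSpace X] (i : C(A, X)) : Prop :=
  ∀ (Z : Type u) [TopologicalSpace Z] (f : C(X, Z)) (H : C(A × unitInterval, Z)),
    (∀ a, H (a, 0) = f (i a)) →
    ∃ G : C(X × unitInterval, Z), (∀ x, G (x, 0) = f x) ∧ ∀ a t, G (i a, t) = H (a, t)

/-- `f` is a homotopy equivalence. -/
def IsHtpyEquiv {A : Type u} {B : Type v} [TopologicalSpace A] [TopologicalSpace B]
    (f : C(A, B)) : Prop :=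
  ∃ g : C(B, A), (g.comp f).Homotopic (ContinuousMap.id A) ∧
    (f.comp g).Homotopic (ContinuousMap.id B)

/-- A pointed topological space. -/
structure PSpace : Type (u + 1) where
  carrier : Type u
  top : TopologicalSpace carrier
  pt : carrier

attribute [instance] PSpace.top

/-- Points of `Z ⊕ *` which get identified when collapsing `A ⊆ Z`. -/
def collapseGood {Z : Type u} (A : Set Z) : Z ⊕ Unit → Prop :=
  Sum.elim (· ∈ A) fun _ => True

/-- The setoid on `Z ⊕ *` which identifies all points of `A` with the added point. -/
def collapseSetoid {Z : Type u} (A : Set Z) : Setoid (Z ⊕ Unit) where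
  r x y := x = y ∨ (collapseGood A x ∧ collapseGood A y)
  iseqv := by
    constructor
    · exact fun x => Or.inl rfl
    · rintro x y (rfl | ⟨h1, h2⟩)
      · exact Or.inl rfl
      · exact Or.inr ⟨h2, h1⟩
    · rintro x y z (rfl | ⟨h1, h2⟩) h
      · exact h
      · rcases h with rfl | ⟨h3, h4⟩
        · exact Or.inr ⟨h1, h2⟩
        · exact Or.inr ⟨h1, h4⟩

/-- The pointed quotient `Z/A`: the quotient of `Z ⊔ *` identifying all of `A ∪ {*}` to a
single point, which serves as basepoint.  (When `A = ∅` this is `Z` with a disjoint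
basepoint added.) -/
def Collapse {Z : Type u} [TopologicalSpace Z] (A : Set Z) : PSpace.{u} where
  carrier := Quotient (collapseSetoid A)
  top := instTopologicalSpaceQuotient
  pt := Quotient.mk _ (Sum.inr ())

/-- The canonical map `Z → Z/A`. -/
def Collapse.mk {Z : Type u} [TopologicalSpace Z] (A : Set Z) (z : Z) : (Collapse A).carrier :=
  Quotient.mk _ (Sum.inl z)

/-- `Z` with a disjoint basepoint added. -/
def plusP (Z : Type u) [TopologicalSpace Z] : PSpace.{u} := Collapse (∅ : Set Z)

/-- The reduced suspension of a pointed space. -/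
def Susp (P : PSpace.{u}) : PSpace.{u} :=
  Collapse {q : P.carrier × unitInterval | q.2 = 0 ∨ q.2 = 1 ∨ q.1 = P.pt}

/-- The canonical map `P × [0,1] → Σ P`. -/
def Susp.mk (P : PSpace.{u}) (z : P.carrier) (t : unitInterval) : (Susp P).carrier :=
  Collapse.mk _ (z, t)

/-- The wedge (one point union) of a family of pointed spaces. -/
def Wedge {ι : Type v} (P : ι → PSpace.{u}) : PSpace.{max u v} :=
  Collapse {x : Σ i, (P i).carrier | x.2 = (P x.1).pt}

/-- The canonical map from a summand into the wedge. -/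
def Wedge.mk {ι : Type v} (P : ι → PSpace.{u}) (i : ι) (z : (P i).carrier) :
    (Wedge P).carrier :=
  Collapse.mk _ ⟨i, z⟩

/-- `G` is the map of suspensions induced by the pointed map `g`. -/
def SuspExtends {P Q : PSpace.{u}} (g : P.carrier → Q.carrier)
    (G : (Susp P).carrier → (Susp Q).carrier) : Prop :=
  (∀ z t, G (Susp.mk P z t) = Susp.mk Q (g z) t) ∧ G (Susp P).pt = (Susp Q).pt

/-- `G` is the map of `j`-fold suspensions induced by the map `g`. -/
def SuspIterExtends : (j : ℕ) → (P Q : PSpace.{u}) → (P.carrier → Q.carrier) →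
    ((Susp^[j] P).carrier → (Susp^[j] Q).carrier) → Prop
  | 0, _, _, g, G => G = g
  | j + 1, P, Q, g, G =>
      ∃ g' : (Susp P).carrier → (Susp Q).carrier,
        SuspExtends g g' ∧ SuspIterExtends j (Susp P) (Susp Q) g' G

/-- `G` is the map of wedges induced by the family of maps `g i`. -/
def WedgeInduced {ι : Type v} (P Q : ι → PSpace.{u}) (g : ∀ i, (P i).carrier → (Q i).carrier)
    (G : (Wedge P).carrier → (Wedge Q).carrier) : Prop :=
  (∀ i z, G (Wedge.mk P i z) = Wedge.mk Q i (g i z)) ∧ G (Wedge P).pt = (Wedge Q).pt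

/-- `g` is the map of collapses induced by `f : Z → W`. -/
def CollapseInduced {Z : Type u} {W : Type v} [TopologicalSpace Z] [TopologicalSpace W]
    (A : Set Z) (B : Set W) (f : Z → W)
    (g : (Collapse A).carrier → (Collapse B).carrier) : Prop :=
  (∀ z, g (Collapse.mk A z) = Collapse.mk B (f z)) ∧ g (Collapse A).pt = (Collapse B).pt

/-- A simplicial space: a sequence of topological spaces with continuous face and
degeneracy maps satisfying the simplicial identities.  The maps `d n i : X (n+1) → X n`
and `s n i : X n → X (n+1)` carry ℕ-valued indices; only the values with
`i ≤ n + 1` (resp. `i ≤ n`) are meaningful, and the simplicial identities are imposed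
exactly in that range. -/
structure SimplicialSpace : Type (u + 1) where
  X : ℕ → Type u
  top : ∀ n, TopologicalSpace (X n)
  d : ∀ n, ℕ → X (n + 1) → X n
  s : ∀ n, ℕ → X n → X (n + 1)
  continuous_d : ∀ n i, Continuous (d n i)
  continuous_s : ∀ n i, Continuous (s n i)
  dd : ∀ n i j, i < j → j ≤ n + 2 → ∀ x, d n i (d (n + 1) j x) = d n (j - 1) (d (n + 1) i x)
  ss : ∀ n i j, i ≤ j → j ≤ n → ∀ x, s (n + 1) i (s n j x) = s (n + 1) (j + 1) (s n i x)
  ds_lt : ∀ n i j, i < j → j ≤ n + 1 → ∀ x,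
    d (n + 1) i (s (n + 1) j x) = s n (j - 1) (d n i x)
  ds_eq : ∀ n j, j ≤ n → ∀ x, d n j (s n j x) = x
  ds_eq' : ∀ n j, j ≤ n → ∀ x, d n (j + 1) (s n j x) = x
  ds_gt : ∀ n i j, j + 1 < i → i ≤ n + 2 → ∀ x,
    d (n + 1) i (s (n + 1) j x) = s n j (d n (i - 1) x)

attribute [instance] SimplicialSpace.top

namespace SimplicialSpace

/-- A morphism of simplicial spaces. -/
structure Hom (X Y : SimplicialSpace.{u}) : Type u where
  f : ∀ n, X.X n → Y.X n
  continuous_f : ∀ n, Continuous (f n)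
  comm_d : ∀ n i, i ≤ n + 1 → ∀ x, f n (X.d n i x) = Y.d n i (f (n + 1) x)
  comm_s : ∀ n i, i ≤ n → ∀ x, f (n + 1) (X.s n i x) = Y.s n i (f n x)

/-- For a sequence `I = (i_r, …, i_1)` (as the list `[i_r, …, i_1]`), the composite
degeneracy `s_I = s_{i_r} ∘ ⋯ ∘ s_{i_1} : X_m → X_{m + r}`. -/
def sComp (X : SimplicialSpace.{u}) : (I : List ℕ) → (m : ℕ) → X.X m → X.X (m + I.length)
  | [], _, y => y
  | i :: I', m, y => X.s (m + I'.length) i (sComp X I' m y)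

/-- For a sequence `I = (i_r, …, i_1)` (as the list `[i_r, …, i_1]`), the composite
face map `d_{χ(I)} = d_{i_1} ∘ d_{i_2} ∘ ⋯ ∘ d_{i_r} : X_{m+r} → X_m` (so `d_{i_r}` is
applied first). -/
def dComp (X : SimplicialSpace.{u}) : (I : List ℕ) → (m : ℕ) → X.X (m + I.length) → X.X m
  | [], _, x => x
  | i :: I', m, x => dComp X I' m (X.d (m + I'.length) i x)

/-- The sequence `I = (i_r, …, i_1)` consists of indices which are in range for the
composite degeneracy `s_I : X_m → X_{m+r}`. -/
def ValidSeq : List ℕ → ℕ → Prop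
  | [], _ => True
  | i :: I', m => i ≤ m + I'.length ∧ ValidSeq I' m

/-- The decreasing degeneracy filtration: `filtS X t n` is the subspace
`S^t(X_n) ⊆ X_n`, the union of the images of all `t`-fold composites of degeneracy
maps.  (`S^0(X_n) = X_n`.) -/
def filtS (X : SimplicialSpace.{u}) : (t : ℕ) → (n : ℕ) → Set (X.X n)
  | 0, _ => Set.univ
  | t + 1, n => {x | ∃ (m : ℕ) (hm : m + 1 = n) (i : ℕ), i ≤ m ∧
      ∃ y ∈ filtS X t m, cast (congrArg X.X hm) (X.s m i y) = x}

lemma filtS_succ_subset (X : SimplicialSpace.{u}) :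
    ∀ (t n : ℕ), X.filtS (t + 1) n ⊆ X.filtS t n := by
  intro t
  induction t with
  | zero => intro n x _; exact Set.mem_univ x
  | succ t ih =>
      rintro n x ⟨m, rfl, i, hi, y, hy, rfl⟩
      exact ⟨m, rfl, i, hi, y, ih m hy, rfl⟩

lemma filtS_antitone (X : SimplicialSpace.{u}) {t t' : ℕ} (h : t ≤ t') (n : ℕ) :
    X.filtS t' n ⊆ X.filtS t n := by
  induction h with
  | refl => exact fun x hx => hx
  | step _ ih => exact fun x hx => ih (X.filtS_succ_subset _ n hx)

end SimplicialSpace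
namespace SimplicialSpace

/-- The composite degeneracy `s_I`, regarded as a map `X_{n - r} → X_n` where `r = |I|`. -/
def sFromTo (X : SimplicialSpace.{u}) (I : List ℕ) (n : ℕ) (h : I.length ≤ n) :
    X.X (n - I.length) → X.X n :=
  fun y => cast (congrArg X.X (Nat.sub_add_cancel h)) (X.sComp I (n - I.length) y)

/-- The composite face map `d_{χ(I)}`, regarded as a map `X_n → X_{n - r}` where `r = |I|`. -/
def dFromTo (X : SimplicialSpace.{u}) (I : List ℕ) (n : ℕ) (h : I.length ≤ n) :
    X.X n → X.X (n - I.length) :=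
  fun x => X.dComp I (n - I.length) (cast (congrArg X.X (Nat.sub_add_cancel h).symm) x)

/-- The image `s_I(X_{n-r}) ⊆ X_n`. -/
def sImage (X : SimplicialSpace.{u}) (I : List ℕ) (n : ℕ) (h : I.length ≤ n) : Set (X.X n) :=
  Set.range (X.sFromTo I n h)

/-- The pointed space `ŝ_I(X_{n-r}) = s_I(X_{n-r}) / s_I S(X_{n-r})`. -/
def sHat (X : SimplicialSpace.{u}) (I : List ℕ) (n : ℕ) (h : I.length ≤ n) : PSpace.{u} :=
  Collapse {x : ↥(X.sImage I n h) |
    (x : X.X n) ∈ X.sFromTo I n h '' X.filtS 1 (n - I.length)}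

/-- The pointed filtration quotient `S^r(X_n)/S^{r+1}(X_n)`. -/
def filtQuot (X : SimplicialSpace.{u}) (n r : ℕ) : PSpace.{u} :=
  Collapse {x : ↥(X.filtS r n) | (x : X.X n) ∈ X.filtS (r + 1) n}

/-- `X` is simplicially NDR: each pair `(S^t(X_n), S^{t+1}(X_n))` is an NDR pair. -/
def SimpliciallyNDR (X : SimplicialSpace.{u}) : Prop :=
  ∀ n t, IsNDRPair {x : ↥(X.filtS t n) | (x : X.X n) ∈ X.filtS (t + 1) n}

/-- `X` is proper: each pair `(X_n, S(X_n))` is a strong NDR pair. -/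
def Proper (X : SimplicialSpace.{u}) : Prop := ∀ n, IsStrongNDRPair (X.filtS 1 n)

/-- `g` is the map `S^r(X_n)/S^{r+1}(X_n) → S^r(Y_n)/S^{r+1}(Y_n)` induced by the
morphism `f : X → Y` of simplicial spaces. -/
def FiltQuotInduced {X Y : SimplicialSpace.{u}} (f : X.Hom Y) (n r : ℕ)
    (g : (X.filtQuot n r).carrier → (Y.filtQuot n r).carrier) : Prop :=
  (∀ (x : X.X n) (hx : x ∈ X.filtS r n) (hfx : f.f n x ∈ Y.filtS r n),
      g (Collapse.mk _ ⟨x, hx⟩) = Collapse.mk _ ⟨f.f n x, hfx⟩) ∧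
  g (X.filtQuot n r).pt = (Y.filtQuot n r).pt

/-- `g` is the map `ŝ_I(X_{n-r}) → ŝ_I(Y_{n-r})` induced by the morphism `f : X → Y`. -/
def SHatInduced {X Y : SimplicialSpace.{u}} (f : X.Hom Y) (I : List ℕ) (n : ℕ)
    (h : I.length ≤ n)
    (g : (X.sHat I n h).carrier → (Y.sHat I n h).carrier) : Prop :=
  (∀ y : X.X (n - I.length),
      g (Collapse.mk _ ⟨X.sFromTo I n h y, Set.mem_range_self y⟩) =
        Collapse.mk _ ⟨Y.sFromTo I n h (f.f (n - I.length) y), Set.mem_range_self _⟩) ∧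
  g (X.sHat I n h).pt = (Y.sHat I n h).pt

end SimplicialSpace

/-- Admissible sequences `(j_r > j_{r-1} > ⋯ > j_1)` of length `r` with entries `< b`,
encoded as strictly decreasing lists. -/
def AdmSeq (r b : ℕ) : Type :=
  {J : List ℕ // J.length = r ∧ J.Pairwise (· > ·) ∧ ∀ i ∈ J, i < b}

/-- Strict lexicographic order on sequences of equal length (comparing from the left,
i.e. at the largest entries first): `I < J` iff they agree above position `p` and
`i_p < j_p`. -/
def SeqLexLT : List ℕ → List ℕ → Prop
  | _, [] => False
  | [], _ :: _ => False
  | i :: I', j :: J' => i < j ∨ (i = j ∧ SeqLexLT I' J')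
namespace SimplexCategory

/-- The topological simplex associated to `x : SimplexCategory` (as in the older Mathlib). -/
def toTopObj (x : SimplexCategory) : Set (Fin (x.len + 1) → NNReal) :=
  { f : Fin (x.len + 1) → NNReal | ∑ i, f i = 1 }

/-- A morphism in `SimplexCategory` induces a map on the associated topological spaces. -/
def toTopMap {x y : SimplexCategory} (f : x ⟶ y) (g : x.toTopObj) : y.toTopObj :=
  ⟨fun i => ∑ j ∈ Finset.univ.filter (f.toOrderHom · = i), g.1 j, by
    simp only [toTopObj, Set.mem_setOf_eq]
    rw [Finset.sum_fiberwise]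
    exact g.2⟩

end SimplexCategory

/-- The topological standard `n`-simplex. -/
abbrev TopSimplex (n : ℕ) : Type :=
  ↥(SimplexCategory.toTopObj (SimplexCategory.mk n))

namespace SimplicialSpace

/-- The disjoint union `⊔ₙ Xₙ × Δⁿ` from which the geometric realization is formed. -/
def RealPre (X : SimplicialSpace.{u}) : Type u :=
  Σ n : ℕ, X.X n × TopSimplex n

instance (X : SimplicialSpace.{u}) : TopologicalSpace (RealPre X) := by
  unfold RealPre; infer_instance

/-- The identifications defining the geometric realization: `(d_i x, u) ∼ (x, δ^i u)`
and `(s_i x, u) ∼ (x, σ^i u)`. -/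
inductive RealRel (X : SimplicialSpace.{u}) : RealPre X → RealPre X → Prop
  | face (n i : ℕ) (hi : i ≤ n + 1) (x : X.X (n + 1)) (u : TopSimplex n) :
      RealRel X ⟨n, (X.d n i x, u)⟩
        ⟨n + 1, (x, SimplexCategory.toTopMap (SimplexCategory.δ ⟨i, by omega⟩) u)⟩
  | degen (n i : ℕ) (hi : i ≤ n) (x : X.X n) (u : TopSimplex (n + 1)) :
      RealRel X ⟨n + 1, (X.s n i x, u)⟩
        ⟨n, (x, SimplexCategory.toTopMap (SimplexCategory.σ ⟨i, by omega⟩) u)⟩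

/-- The geometric realization `|X|` of a simplicial space. -/
def Realization (X : SimplicialSpace.{u}) : Type u := Quot (RealRel X)

instance (X : SimplicialSpace.{u}) : TopologicalSpace (Realization X) := by
  unfold Realization; infer_instance

/-- The subset of `|X|` of points represented by simplices of dimension `< j`
(so `FleBelow X 0 = ∅` and `FleBelow X (j+1) = F_j|X|`). -/
def FleBelow (X : SimplicialSpace.{u}) (j : ℕ) : Set (Realization X) :=
  {q | ∃ (n : ℕ), n < j ∧ ∃ (x : X.X n) (u : TopSimplex n), q = Quot.mk _ ⟨n, (x, u)⟩}

/-- The skeletal filtration `F_j|X|` of the geometric realization. -/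
def Fle (X : SimplicialSpace.{u}) (j : ℕ) : Set (Realization X) := FleBelow X (j + 1)

/-- The pointed filtration quotient `F_j|X| / F_{j-1}|X|` (for `j = 0` this is
`F_0|X|` with a disjoint basepoint added). -/
def realQuot (X : SimplicialSpace.{u}) (j : ℕ) : PSpace.{u} :=
  Collapse {q : ↥(Fle X j) | (q : Realization X) ∈ FleBelow X j}

/-- `g` is the map `|X| → |Y|` induced by a morphism `f : X → Y` of simplicial spaces. -/
def RealMapInduced {X Y : SimplicialSpace.{u}} (f : X.Hom Y)
    (g : Realization X → Realization Y) : Prop :=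
  ∀ (n : ℕ) (x : X.X n) (u : TopSimplex n),
    g (Quot.mk _ ⟨n, (x, u)⟩) = Quot.mk _ ⟨n, (f.f n x, u)⟩

/-- `g` is the map `F_j|X|/F_{j-1}|X| → F_j|Y|/F_{j-1}|Y|` induced by a morphism
`f : X → Y` of simplicial spaces. -/
def RealQuotInduced {X Y : SimplicialSpace.{u}} (f : X.Hom Y) (j : ℕ)
    (g : (realQuot X j).carrier → (realQuot Y j).carrier) : Prop :=
  ∃ g0 : Realization X → Realization Y, RealMapInduced f g0 ∧
    ∃ hg0 : ∀ q ∈ Fle X j, g0 q ∈ Fle Y j,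
      (∀ (q : Realization X) (hq : q ∈ Fle X j),
        g (Collapse.mk _ ⟨q, hq⟩) = Collapse.mk _ ⟨g0 q, hg0 q hq⟩) ∧
      g (realQuot X j).pt = (realQuot Y j).pt

end SimplicialSpace

/-- The mapping cone of a map `f : A → X`: the quotient of `X ⊔ (A × [0,1])` obtained by
identifying `(a, 0)` with `f a` and collapsing `A × {1}` to a point. -/
inductive ConeRel {A X : Type u} [TopologicalSpace A] [TopologicalSpace X] (f : A → X) :
    (X ⊕ (A × unitInterval)) → (X ⊕ (A × unitInterval)) → Prop
  | glue (a : A) : ConeRel f (Sum.inr (a, 0)) (Sum.inl (f a))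
  | tip (a b : A) : ConeRel f (Sum.inr (a, 1)) (Sum.inr (b, 1))

/-- The mapping cone of `f : A → X`. -/
def MappingCone {A X : Type u} [TopologicalSpace A] [TopologicalSpace X] (f : A → X) :
    Type u :=
  Quot (ConeRel f)

instance {A X : Type u} [TopologicalSpace A] [TopologicalSpace X] (f : A → X) :
    TopologicalSpace (MappingCone f) := by
  unfold MappingCone; infer_instance
/-- An abstract simplicial complex on the vertex set `{1, …, m}` (encoded as `Fin m`):
a collection of finite subsets closed under taking subsets. -/
structure AbsSimplicialComplex (m : ℕ) : Type where
  faces : Set (Finset (Fin m))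
  down_closed : ∀ σ ∈ faces, ∀ τ ⊆ σ, τ ∈ faces

/-- The `n`-simplices of the simplicial set `Δ(K)`: weakly order-preserving
`(n+1)`-tuples of vertices whose underlying set is a simplex of `K`. -/
def DeltaObj {m : ℕ} (K : AbsSimplicialComplex m) (n : ℕ) : Type :=
  {v : Fin (n + 1) → Fin m // Monotone v ∧ Finset.image v Finset.univ ∈ K.faces}

/-- The coface index map `δ_i : [n] → [n+1]` (with out-of-range `i` clamped). -/
def dIdx (n i : ℕ) (k : Fin (n + 1)) : Fin (n + 2) :=
  ⟨if k.1 < i then k.1 else k.1 + 1, by have := k.isLt; split_ifs <;> omega⟩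

/-- The codegeneracy index map `σ_i : [n+1] → [n]` (with out-of-range `i` clamped). -/
def sIdx (n i : ℕ) (k : Fin (n + 2)) : Fin (n + 1) :=
  ⟨if k.1 ≤ min i n then k.1 else k.1 - 1, by
    have := k.isLt; have := Nat.min_le_right i n; split_ifs <;> omega⟩

/-- The simplicial set `Δ(K)` associated to an abstract simplicial complex `K`,
regarded as a simplicial space in which every space is discrete. -/
def DeltaK {m : ℕ} (K : AbsSimplicialComplex m) : SimplicialSpace.{0} where
  X n := DeltaObj K n
  top _ := ⊥
  d n i v := ⟨fun k => v.1 (dIdx n i k),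
    fun a b hab => v.2.1 (by
      simp only [dIdx, Fin.mk_le_mk]
      have := Fin.le_def.mp hab
      split_ifs <;> omega),
    K.down_closed _ v.2.2 _ (Finset.image_subset_iff.mpr fun k _ =>
      Finset.mem_image_of_mem _ (Finset.mem_univ _))⟩
  s n i v := ⟨fun k => v.1 (sIdx n i k),
    fun a b hab => v.2.1 (by
      simp only [sIdx, Fin.mk_le_mk]
      have := Fin.le_def.mp hab
      split_ifs <;> omega),
    K.down_closed _ v.2.2 _ (Finset.image_subset_iff.mpr fun k _ =>
      Finset.mem_image_of_mem _ (Finset.mem_univ _))⟩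
  continuous_d _ _ := continuous_bot
  continuous_s _ _ := continuous_bot
  dd n i j hij hj x := by
    apply Subtype.ext; funext k
    refine congrArg x.1 (Fin.ext ?_)
    simp [dIdx]
    have := k.isLt
    split_ifs <;> omega
  ss n i j hij hj x := by
    apply Subtype.ext; funext k
    refine congrArg x.1 (Fin.ext ?_)
    simp [sIdx]
    have := k.isLt
    split_ifs <;> omega
  ds_lt n i j hij hj x := by
    apply Subtype.ext; funext k
    refine congrArg x.1 (Fin.ext ?_)
    simp [dIdx, sIdx]
    have := k.isLt
    split_ifs <;> omega
  ds_eq n j hj x := by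
    apply Subtype.ext; funext k
    refine congrArg x.1 (Fin.ext ?_)
    simp [dIdx, sIdx]
    have := k.isLt
    split_ifs <;> omega
  ds_eq' n j hj x := by
    apply Subtype.ext; funext k
    refine congrArg x.1 (Fin.ext ?_)
    simp [dIdx, sIdx]
    have := k.isLt
    split_ifs <;> omega
  ds_gt n i j hij hi x := by
    apply Subtype.ext; funext k
    refine congrArg x.1 (Fin.ext ?_)
    simp [dIdx, sIdx]
    have := k.isLt
    split_ifs <;> omega

/-- The geometric realization (polyhedron) `|K|` of an abstract simplicial complex on
`{1, …, m}`: the set of convex weightings of the vertices whose support lies in a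
simplex of `K`, topologized as a subspace of `ℝ^m`. -/
def geomRealSC {m : ℕ} (K : AbsSimplicialComplex m) : Type :=
  {w : Fin m → ℝ // (∀ i, 0 ≤ w i) ∧ (∑ i, w i) = 1 ∧
    ∃ σ ∈ K.faces, ∀ i, w i ≠ 0 → i ∈ σ}

instance {m : ℕ} (K : AbsSimplicialComplex m) : TopologicalSpace (geomRealSC K) := by
  unfold geomRealSC; infer_instance

/-! Since `Δ(K)_n` is discrete, so is every `ŝ_J(Δ(K)_{n-r})`, and the suspension of a wedge
of discrete pointed spaces is the wedge of their suspensions. It therefore suffices to match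
points: a simplex `x ∈ s_J(Δ(K)_{n-r})` avoids `s_J S(Δ(K)_{n-r})` exactly when `J` is the
decreasing sequence of the positions `k` with `x_k = x_{k+1}`. This gives a pointed bijection
`Δ(K)_n₊ ≃ ⋁_J ŝ_J(Δ(K)_{n-r})`, and the splitting map is in fact a homeomorphism. -/

namespace Collapse

variable {Z : Type u} [TopologicalSpace Z] {A : Set Z}

def lift {Y : Type v} (f : Z → Y) (y₀ : Y) (hf : ∀ z ∈ A, f z = y₀) :
    (Collapse A).carrier → Y :=
  Quotient.lift (Sum.elim f fun _ => y₀) <| by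
    have collapsed : ∀ c, collapseGood A c → Sum.elim f (fun _ => y₀) c = y₀ := by
      rintro (z | ⟨⟩) hc
      exacts [hf z hc, rfl]
    rintro a b (rfl | ⟨ha, hb⟩)
    · rfl
    · rw [collapsed a ha, collapsed b hb]

lemma continuous_lift {Y : Type v} [TopologicalSpace Y] {f : Z → Y} {y₀ : Y}
    (hf : ∀ z ∈ A, f z = y₀) (hc : Continuous f) : Continuous (lift f y₀ hf) :=
  Continuous.quotient_lift (hc.sumElim continuous_const) _

lemma continuous_mk : Continuous (Collapse.mk A) :=
  continuous_quotient_mk'.comp continuous_inl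

lemma mk_eq_pt {z : Z} (hz : z ∈ A) : Collapse.mk A z = (Collapse A).pt :=
  Quotient.sound (Or.inr ⟨hz, trivial⟩)

@[elab_as_elim]
lemma induction_on {motive : (Collapse A).carrier → Prop} (q : (Collapse A).carrier)
    (mk : ∀ z, motive (Collapse.mk A z)) (pt : motive (Collapse A).pt) : motive q :=
  Quotient.inductionOn q fun
    | .inl z => mk z
    | .inr () => pt

instance [DiscreteTopology Z] : DiscreteTopology (Collapse A).carrier :=
  ⟨eq_bot_of_singletons_open fun _ => isOpen_coinduced.mpr (isOpen_discrete _)⟩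

end Collapse

namespace Susp

universe w

variable {P : PSpace.{u}} {Q : PSpace.{v}}

lemma mk_zero (z : P.carrier) : Susp.mk P z 0 = (Susp P).pt :=
  Collapse.mk_eq_pt (Or.inl rfl)

lemma mk_one (z : P.carrier) : Susp.mk P z 1 = (Susp P).pt :=
  Collapse.mk_eq_pt (Or.inr (Or.inl rfl))

lemma mk_pt (t : unitInterval) : Susp.mk P P.pt t = (Susp P).pt :=
  Collapse.mk_eq_pt (Or.inr (Or.inr rfl))

lemma continuous_mk : Continuous fun q : P.carrier × unitInterval => Susp.mk P q.1 q.2 :=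
  Collapse.continuous_mk

@[elab_as_elim]
lemma induction_on {motive : (Susp P).carrier → Prop} (q : (Susp P).carrier)
    (mk : ∀ z t, motive (Susp.mk P z t)) (pt : motive (Susp P).pt) : motive q :=
  Collapse.induction_on q (fun z => mk z.1 z.2) pt

def map (f : P.carrier → Q.carrier) (hf : f P.pt = Q.pt) :
    (Susp P).carrier → (Susp Q).carrier :=
  Collapse.lift (fun q => Susp.mk Q (f q.1) q.2) (Susp Q).pt <| by
    rintro ⟨z, t⟩ (rfl | rfl | rfl)
    exacts [mk_zero _, mk_one _, hf ▸ mk_pt _]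

lemma continuous_map {f : P.carrier → Q.carrier} (hf : f P.pt = Q.pt) (hc : Continuous f) :
    Continuous (map f hf) :=
  Collapse.continuous_lift _ <| continuous_mk.comp (hc.prodMap continuous_id)

lemma map_map {R : PSpace.{w}} (f : P.carrier → Q.carrier) (hf : f P.pt = Q.pt)
    (g : Q.carrier → R.carrier) (hg : g Q.pt = R.pt) (q : (Susp P).carrier) :
    map g hg (map f hf q) = map (g ∘ f) (by simp [hf, hg]) q :=
  induction_on q (fun _ _ => rfl) rfl

lemma map_id (q : (Susp P).carrier) : map id rfl q = q :=
  induction_on q (fun _ _ => rfl) rfl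

def congr (e : P.carrier ≃ₜ Q.carrier) (he : e P.pt = Q.pt) :
    (Susp P).carrier ≃ₜ (Susp Q).carrier where
  toFun := map e he
  invFun := map e.symm (by rw [← he, e.symm_apply_apply])
  left_inv q := by simp only [map_map, Homeomorph.symm_comp_self, map_id]
  right_inv q := by simp only [map_map, Homeomorph.self_comp_symm, map_id]
  continuous_toFun := continuous_map he e.continuous
  continuous_invFun := continuous_map _ e.symm.continuous

end Susp

namespace Wedge

variable {ι : Type v} {P : ι → PSpace.{u}}

lemma mk_pt (i : ι) : Wedge.mk P i (P i).pt = (Wedge P).pt :=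
  Collapse.mk_eq_pt rfl

lemma continuous_mk (i : ι) : Continuous (Wedge.mk P i) :=
  Collapse.continuous_mk.comp continuous_sigmaMk

@[elab_as_elim]
lemma induction_on {motive : (Wedge P).carrier → Prop} (q : (Wedge P).carrier)
    (mk : ∀ i z, motive (Wedge.mk P i z)) (pt : motive (Wedge P).pt) : motive q :=
  Collapse.induction_on q (fun z => mk z.1 z.2) pt

instance [∀ i, DiscreteTopology (P i).carrier] : DiscreteTopology (Wedge P).carrier :=
  inferInstanceAs (DiscreteTopology (Collapse _).carrier)

def lift {Y : Type*} (f : ∀ i, (P i).carrier → Y) (y₀ : Y) (hf : ∀ i, f i (P i).pt = y₀) :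
    (Wedge P).carrier → Y :=
  Collapse.lift (fun z => f z.1 z.2) y₀ fun z hz => hz ▸ hf z.1

end Wedge

namespace Susp

variable {ι : Type v} (P : ι → PSpace.{u})

def wedgeMk (w : (Wedge P).carrier) (t : unitInterval) : (Wedge fun i => Susp (P i)).carrier :=
  Wedge.lift (fun i z => Wedge.mk _ i (Susp.mk (P i) z t)) _
    (fun i => by rw [mk_pt, Wedge.mk_pt]) w

variable {P}

lemma wedgeMk_of_boundary {t : unitInterval} (ht : t = 0 ∨ t = 1) (w : (Wedge P).carrier) :
    wedgeMk P w t = (Wedge _).pt := by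
  induction w using Wedge.induction_on with
  | mk i z =>
    obtain rfl | rfl := ht
    · exact (congrArg (Wedge.mk _ i) (mk_zero z)).trans (Wedge.mk_pt i)
    · exact (congrArg (Wedge.mk _ i) (mk_one z)).trans (Wedge.mk_pt i)
  | pt => rfl

lemma continuous_wedgeMk [∀ i, DiscreteTopology (P i).carrier] :
    Continuous fun q : (Wedge P).carrier × unitInterval => wedgeMk P q.1 q.2 := by
  refine continuous_prod_of_discrete_left.mpr fun w => ?_
  induction w using Wedge.induction_on with
  | mk i z => exact (Wedge.continuous_mk i).comp (continuous_mk.comp (Continuous.prodMk_right z))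
  | pt => exact continuous_const

variable (P)

def wedgeHomeomorph [∀ i, DiscreteTopology (P i).carrier] :
    (Susp (Wedge P)).carrier ≃ₜ (Wedge fun i => Susp (P i)).carrier where
  toFun := Collapse.lift (fun q => wedgeMk P q.1 q.2) _ <| by
    rintro ⟨w, t⟩ (ht | ht | rfl)
    exacts [wedgeMk_of_boundary (.inl ht) w, wedgeMk_of_boundary (.inr ht) w, rfl]
  invFun := Wedge.lift (P := fun i => Susp (P i))
    (fun i => map (Wedge.mk P i) (Wedge.mk_pt i)) (Susp (Wedge P)).pt fun _ => rfl
  left_inv q := by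
    induction q using induction_on with
    | mk w t =>
      induction w using Wedge.induction_on with
      | mk i z => rfl
      | pt => exact (mk_pt t).symm
    | pt => rfl
  right_inv q := by
    induction q using Wedge.induction_on with
    | mk i s =>
      induction s using induction_on with
      | mk z t => rfl
      | pt => exact (Wedge.mk_pt (P := fun i => Susp (P i)) i).symm
    | pt => rfl
  continuous_toFun := Collapse.continuous_lift _ continuous_wedgeMk
  continuous_invFun := Collapse.continuous_lift _ <|
    continuous_sigma fun i => continuous_map _ (Wedge.continuous_mk i)

end Susp

lemma ContinuousMap.HomotopyEquiv.isHtpyEquiv {X : Type u} {Y : Type v} [TopologicalSpace X]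
    [TopologicalSpace Y] (h : ContinuousMap.HomotopyEquiv X Y) : IsHtpyEquiv h.toFun :=
  ⟨h.invFun, h.left_inv, h.right_inv⟩

namespace DeltaK

variable {m : ℕ} {K : AbsSimplicialComplex m}

/-- The `k`-th vertex of `x`; indices beyond the last one are clamped to `L`. -/
def vertex {L : ℕ} (x : (DeltaK K).X L) (k : ℕ) : Fin m :=
  x.1 ⟨min k L, Nat.lt_succ_of_le (Nat.min_le_right _ _)⟩

def repeats {L : ℕ} (x : (DeltaK K).X L) : Finset ℕ :=
  (Finset.range L).filter fun k => vertex x k = vertex x (k + 1)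

def repeatSeq {L : ℕ} (x : (DeltaK K).X L) : List ℕ :=
  (repeats x).sort (· ≥ ·)

lemma apply_eq_vertex {L : ℕ} (x : (DeltaK K).X L) (k : Fin (L + 1)) :
    x.1 k = vertex x k :=
  congrArg x.1 (Fin.ext (by have := k.isLt; simp only [Nat.min_eq_left (Nat.lt_succ_iff.mp this)]))

lemma vertex_s {M i : ℕ} (y : (DeltaK K).X M) {k : ℕ} (hk : k ≤ M + 1) :
    vertex ((DeltaK K).s M i y) k = if k ≤ i then vertex y k else vertex y (k - 1) := by
  show y.1 (sIdx M i ⟨min k (M + 1), _⟩) = _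
  unfold vertex
  split_ifs <;> exact congrArg y.1 (Fin.ext (by simp only [sIdx]; split_ifs <;> omega))

lemma vertex_d {M i : ℕ} (x : (DeltaK K).X (M + 1)) {k : ℕ} (hk : k ≤ M) :
    vertex ((DeltaK K).d M i x) k = if k < i then vertex x k else vertex x (k + 1) := by
  show x.1 (dIdx M i ⟨min k M, _⟩) = _
  unfold vertex
  split_ifs <;> exact congrArg x.1 (Fin.ext (by simp only [dIdx]; split_ifs <;> omega))

lemma s_d_of_mem_repeats {M i : ℕ} {x : (DeltaK K).X (M + 1)} (hi : i ∈ repeats x) :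
    (DeltaK K).s M i ((DeltaK K).d M i x) = x := by
  obtain ⟨hiM, hrep⟩ := Finset.mem_filter.mp hi
  replace hiM : i ≤ M := by simpa using hiM
  apply Subtype.ext; funext k
  rw [apply_eq_vertex, apply_eq_vertex x k, vertex_s _ (by omega)]
  rcases lt_trichotomy k.1 i with h | h | h
  · rw [if_pos h.le, vertex_d _ (by omega), if_pos h]
  · rw [if_pos h.le, vertex_d _ (by omega), if_neg h.not_lt, h, ← hrep]
  · rw [if_neg (by omega), vertex_d _ (by omega), if_neg (by omega),
      Nat.sub_add_cancel (by omega)]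

lemma repeats_s {M i : ℕ} (hi : i ≤ M) (y : (DeltaK K).X M) :
    repeats ((DeltaK K).s M i y)
      = insert i ((repeats y).image fun k => if k < i then k else k + 1) := by
  have hv : ∀ {k}, k ≤ M + 1 → vertex ((DeltaK K).s M i y) k
      = if k ≤ i then vertex y k else vertex y (k - 1) := vertex_s y
  ext k
  simp only [repeats, Finset.mem_filter, Finset.mem_range, Finset.mem_insert, Finset.mem_image]
  constructor
  · rintro ⟨hk, hrep⟩
    rw [hv (by omega), hv (by omega)] at hrep
    rcases lt_trichotomy k i with h | rfl | h
    · rw [if_pos h.le, if_pos (show k + 1 ≤ i by omega)] at hrep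
      exact .inr ⟨k, ⟨by omega, hrep⟩, if_pos h⟩
    · exact .inl rfl
    · rw [if_neg (by omega), if_neg (by omega), Nat.add_sub_cancel,
        ← Nat.sub_add_cancel (n := k) (m := 1) (by omega)] at hrep
      exact .inr ⟨k - 1, ⟨by omega, hrep⟩, by rw [if_neg (by omega)]; omega⟩
  · rintro (rfl | ⟨a, ⟨ha, hrep⟩, rfl⟩)
    · refine ⟨by omega, ?_⟩
      rw [hv (by omega), hv (by omega), if_pos le_rfl, if_neg (by omega), Nat.add_sub_cancel]
    · by_cases h : a < i
      · rw [if_pos h, hv (by omega), hv (by omega), if_pos h.le,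
          if_pos (show a + 1 ≤ i by omega)]
        exact ⟨by omega, hrep⟩
      · rw [if_neg h, hv (by omega), hv (by omega), if_neg (by omega), if_neg (by omega)]
        exact ⟨by omega, by simpa using hrep⟩

lemma card_repeats_s {M i : ℕ} (hi : i ≤ M) (y : (DeltaK K).X M) :
    (repeats ((DeltaK K).s M i y)).card = (repeats y).card + 1 := by
  rw [repeats_s hi y, Finset.card_insert_of_notMem, Finset.card_image_of_injOn]
  · intro a _ b _ hab
    simp only at hab
    split_ifs at hab <;> omega
  · simp only [Finset.mem_image, not_exists, not_and]
    intro a _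
    split_ifs <;> omega

lemma repeats_cast {L L' : ℕ} (h : L = L') (x : (DeltaK K).X L) :
    repeats (cast (congrArg (DeltaK K).X h) x) = repeats x := by
  subst h; rfl

lemma mem_filtS_one_iff {M : ℕ} (y : (DeltaK K).X M) :
    y ∈ (DeltaK K).filtS 1 M ↔ (repeats y).Nonempty := by
  constructor
  · rintro ⟨M', rfl, i, hi, z, -, rfl⟩
    exact ⟨i, by rw [cast_eq, repeats_s hi]; exact Finset.mem_insert_self _ _⟩
  · rintro ⟨k, hk⟩
    obtain ⟨M', rfl⟩ : ∃ M', M' + 1 = M :=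
      ⟨M - 1, by have := Finset.mem_range.mp (Finset.mem_filter.mp hk).1; omega⟩
    exact ⟨M', rfl, k, by simpa using (Finset.mem_filter.mp hk).1, _, Set.mem_univ _,
      s_d_of_mem_repeats hk⟩

open SimplicialSpace

lemma card_repeats_sComp : ∀ {J : List ℕ} {M : ℕ}, ValidSeq J M → ∀ y : (DeltaK K).X M,
    (repeats ((DeltaK K).sComp J M y)).card = J.length + (repeats y).card
  | [], _, _, _ => by simp [sComp]
  | _ :: _, _, hv, y => by
    rw [sComp, card_repeats_s hv.1, card_repeats_sComp hv.2 y, List.length_cons]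
    omega

lemma toFinset_subset_repeats_sComp : ∀ {J : List ℕ} {M : ℕ}, J.Pairwise (· > ·) →
    ValidSeq J M → ∀ y : (DeltaK K).X M, J.toFinset ⊆ repeats ((DeltaK K).sComp J M y)
  | [], _, _, _, _ => by simp
  | i :: _, _, hJ, hv, y => by
    rw [sComp, repeats_s hv.1, List.toFinset_cons]
    refine Finset.insert_subset_insert _ fun j hj => Finset.mem_image.mpr
      ⟨j, toFinset_subset_repeats_sComp (List.pairwise_cons.mp hJ).2 hv.2 y hj, ?_⟩
    exact if_pos ((List.pairwise_cons.mp hJ).1 j (List.mem_toFinset.mp hj))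

lemma exists_sComp_eq_of_subset_repeats : ∀ {J : List ℕ} {M : ℕ}, J.Pairwise (· > ·) →
    ∀ x : (DeltaK K).X (M + J.length), J.toFinset ⊆ repeats x →
      ∃ y : (DeltaK K).X M, (DeltaK K).sComp J M y = x
  | [], _, _, x, _ => ⟨x, rfl⟩
  | i :: J, M, hJ, x, hsub => by
    have hi : i ∈ repeats x := hsub (List.mem_toFinset.mpr List.mem_cons_self)
    have hiM : i ≤ M + J.length := by
      have := Finset.mem_range.mp (Finset.mem_filter.mp hi).1
      simp only [List.length_cons] at this
      omega
    have hx : (DeltaK K).s (M + J.length) i ((DeltaK K).d (M + J.length) i x) = x :=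
      s_d_of_mem_repeats hi
    have hsub' : J.toFinset ⊆ repeats ((DeltaK K).d (M + J.length) i x) := by
      intro j hj
      have hji : j < i := (List.pairwise_cons.mp hJ).1 j (List.mem_toFinset.mp hj)
      have hjx : j ∈ repeats x :=
        hsub (by rw [List.toFinset_cons]; exact Finset.mem_insert_of_mem hj)
      rw [← hx, repeats_s hiM, Finset.mem_insert, Finset.mem_image] at hjx
      obtain hji' | ⟨a, ha, hfa⟩ := hjx
      · omega
      · split_ifs at hfa <;> first | omega | exact hfa ▸ ha
    obtain ⟨y, hy⟩ := exists_sComp_eq_of_subset_repeats (List.pairwise_cons.mp hJ).2 _ hsub'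
    exact ⟨y, by rw [sComp, hy, hx]⟩

lemma validSeq_of_pairwise_gt : ∀ {J : List ℕ} {M : ℕ}, J.Pairwise (· > ·) →
    (∀ i ∈ J, i < M + J.length) → ValidSeq J M
  | [], _, _, _ => trivial
  | i :: J, M, hJ, hlt => by
    have hi := hlt i List.mem_cons_self
    simp only [List.length_cons] at hi
    refine ⟨by omega, validSeq_of_pairwise_gt (List.pairwise_cons.mp hJ).2 fun j hj => ?_⟩
    have := (List.pairwise_cons.mp hJ).1 j hj
    omega

lemma repeatSeq_eq_iff {L : ℕ} {J : List ℕ} (hJ : J.Pairwise (· > ·)) (x : (DeltaK K).X L) :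
    repeatSeq x = J ↔ repeats x = J.toFinset := by
  constructor
  · rintro rfl
    exact (Finset.sort_toFinset _ _).symm
  · intro h
    rw [repeatSeq, h, List.toFinset_sort _ hJ.nodup]
    exact hJ.imp le_of_lt

lemma pairwise_repeatSeq {L : ℕ} (x : (DeltaK K).X L) : (repeatSeq x).Pairwise (· > ·) :=
  (Finset.sortedGT_sort _).pairwise

lemma length_repeatSeq_le {L : ℕ} (x : (DeltaK K).X L) : (repeatSeq x).length ≤ L := by
  rw [repeatSeq, Finset.length_sort]
  exact (Finset.card_filter_le _ _).trans (Finset.card_range L).le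

lemma lt_of_mem_repeatSeq {L : ℕ} {x : (DeltaK K).X L} {i : ℕ} (hi : i ∈ repeatSeq x) :
    i < L := by
  rw [repeatSeq, Finset.mem_sort] at hi
  exact Finset.mem_range.mp (Finset.mem_filter.mp hi).1

lemma mem_sImage_repeatSeq {L : ℕ} (x : (DeltaK K).X L) :
    x ∈ (DeltaK K).sImage (repeatSeq x) L (length_repeatSeq_le x) := by
  have hL := Nat.sub_add_cancel (length_repeatSeq_le x)
  obtain ⟨y, hy⟩ := exists_sComp_eq_of_subset_repeats (pairwise_repeatSeq x)
    (cast (congrArg (DeltaK K).X hL.symm) x)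
    (by rw [repeats_cast hL.symm, repeatSeq, Finset.sort_toFinset])
  exact ⟨y, by rw [sFromTo, hy, cast_cast, cast_eq]⟩

theorem mem_image_filtS_iff {L : ℕ} {J : List ℕ} (hJ : J.Pairwise (· > ·))
    (hJL : ∀ i ∈ J, i < L) (hlen : J.length ≤ L) {x : (DeltaK K).X L}
    (hx : x ∈ (DeltaK K).sImage J L hlen) :
    x ∈ (DeltaK K).sFromTo J L hlen '' (DeltaK K).filtS 1 (L - J.length) ↔
      repeatSeq x ≠ J := by
  have hv : ValidSeq J (L - J.length) :=
    validSeq_of_pairwise_gt hJ fun i hi => by have := hJL i hi; omega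
  have hcard : ∀ y, (repeats ((DeltaK K).sFromTo J L hlen y)).card
      = J.length + (repeats y).card := fun y => by
    rw [sFromTo, repeats_cast (Nat.sub_add_cancel hlen), card_repeats_sComp hv]
  have hJcard : J.toFinset.card = J.length := List.toFinset_card_of_nodup hJ.nodup
  obtain ⟨y, rfl⟩ := hx
  have hsub : J.toFinset ⊆ repeats ((DeltaK K).sFromTo J L hlen y) := by
    rw [sFromTo, repeats_cast (Nat.sub_add_cancel hlen)]
    exact toFinset_subset_repeats_sComp hJ hv y
  rw [Ne, repeatSeq_eq_iff hJ, ← not_iff_not, not_not]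
  constructor
  · intro hnd
    refine (Finset.eq_of_subset_of_card_le hsub ?_).symm
    have hy : repeats y = ∅ := Finset.not_nonempty_iff_eq_empty.mp fun hne =>
      hnd ⟨y, (mem_filtS_one_iff y).mpr hne, rfl⟩
    rw [hcard, hy, hJcard, Finset.card_empty, Nat.add_zero]
  · rintro heq ⟨y', hy', hyy'⟩
    have := hcard y'
    rw [hyy', heq, hJcard] at this
    have := Finset.card_pos.mpr ((mem_filtS_one_iff y').mp hy')
    omega

end DeltaK

instance {Z : Type u} [TopologicalSpace Z] [DiscreteTopology Z] :
    DiscreteTopology (plusP Z).carrier :=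
  inferInstanceAs (DiscreteTopology (Collapse _).carrier)

instance {X : SimplicialSpace.{u}} [∀ n, DiscreteTopology (X.X n)] {I : List ℕ} {n : ℕ}
    {h : I.length ≤ n} : DiscreteTopology (X.sHat I n h).carrier :=
  inferInstanceAs (DiscreteTopology (Collapse _).carrier)

-- Typed as a point of `plusP Z`, so that it can share an `if` with `(plusP Z).pt`.
def plusP.mk {Z : Type u} [TopologicalSpace Z] (z : Z) : (plusP Z).carrier := Collapse.mk ∅ z

namespace DeltaK

variable {m : ℕ} (K : AbsSimplicialComplex m) (n : ℕ)

instance : DiscreteTopology ((DeltaK K).X n) := ⟨rfl⟩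

abbrev AdmIndex (n : ℕ) : Type := Σ r : Fin (n + 1), AdmSeq ↑r n

def AdmIndex.seq {n : ℕ} (p : AdmIndex n) : List ℕ := p.2.val

lemma AdmIndex.length_le {n : ℕ} (p : AdmIndex n) : p.seq.length ≤ n := by
  rw [seq, p.2.property.1]
  exact Nat.lt_succ_iff.mp p.1.isLt

lemma AdmIndex.pairwise_gt {n : ℕ} (p : AdmIndex n) : p.seq.Pairwise (· > ·) :=
  p.2.property.2.1

lemma AdmIndex.lt_of_mem {n : ℕ} (p : AdmIndex n) : ∀ i ∈ p.seq, i < n :=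
  p.2.property.2.2

variable {K n} in
def admIndex (x : (DeltaK K).X n) : AdmIndex n :=
  ⟨⟨(repeatSeq x).length, Nat.lt_succ_of_le (length_repeatSeq_le x)⟩,
    ⟨repeatSeq x, rfl, pairwise_repeatSeq x, fun _ => lt_of_mem_repeatSeq⟩⟩

variable {K n} in
lemma admIndex_eq {x : (DeltaK K).X n} {p : AdmIndex n} (h : repeatSeq x = p.seq) :
    admIndex x = p := by
  obtain ⟨⟨r, hr⟩, J, hJ⟩ := p
  obtain rfl : repeatSeq x = J := h
  obtain rfl : (repeatSeq x).length = r := hJ.1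
  rfl

abbrev sHatWedge : PSpace.{0} :=
  Wedge fun p : AdmIndex n => (DeltaK K).sHat p.seq n p.length_le

def plusToSHatWedge : (plusP ((DeltaK K).X n)).carrier → (sHatWedge K n).carrier :=
  Collapse.lift
    (fun x => Wedge.mk _ (admIndex x) (Collapse.mk _ ⟨x, mem_sImage_repeatSeq x⟩))
    (sHatWedge K n).pt fun _ h => h.elim

def sHatWedgeToPlus : (sHatWedge K n).carrier → (plusP ((DeltaK K).X n)).carrier :=
  Wedge.lift
    (fun p => Collapse.lift
      (fun xs => if repeatSeq xs.1 = p.seq then plusP.mk xs.1 else (plusP _).pt) _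
      fun xs hxs => if_neg <| (mem_image_filtS_iff p.pairwise_gt p.lt_of_mem _ xs.2).mp hxs)
    _ fun _ => rfl

variable {K n}

lemma sHatWedgeToPlus_mk (p : AdmIndex n) {x : (DeltaK K).X n}
    (hx : x ∈ (DeltaK K).sImage p.seq n p.length_le) :
    sHatWedgeToPlus K n (Wedge.mk _ p (Collapse.mk _ ⟨x, hx⟩))
      = if repeatSeq x = p.seq then plusP.mk x else (plusP _).pt :=
  rfl

lemma plusToSHatWedge_sHatWedgeToPlus (q : (sHatWedge K n).carrier) :
    plusToSHatWedge K n (sHatWedgeToPlus K n q) = q := by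
  induction q using Wedge.induction_on with
  | mk p w =>
    induction w using Collapse.induction_on with
    | mk xs =>
      obtain ⟨x, hx⟩ := xs
      rw [sHatWedgeToPlus_mk]
      split_ifs with h
      · obtain rfl := admIndex_eq h
        rfl
      · have hpt : Collapse.mk _ (⟨x, hx⟩ : (DeltaK K).sImage p.seq n p.length_le)
            = ((DeltaK K).sHat p.seq n p.length_le).pt :=
          Collapse.mk_eq_pt ((mem_image_filtS_iff p.pairwise_gt p.lt_of_mem _ hx).mpr h)
        rw [hpt, Wedge.mk_pt]
        rfl
    | pt => exact (Wedge.mk_pt p).symm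
  | pt => rfl

variable (K n)

def plusEquivSHatWedge : (plusP ((DeltaK K).X n)).carrier ≃ (sHatWedge K n).carrier where
  toFun := plusToSHatWedge K n
  invFun := sHatWedgeToPlus K n
  left_inv q := by
    induction q using Collapse.induction_on with
    | mk x => exact if_pos rfl
    | pt => rfl
  right_inv := plusToSHatWedge_sHatWedgeToPlus

end DeltaK

/-- Let `K` be an abstract simplicial complex on `[m]`, and regard
`Δ(K)` as a simplicial space with each `Δ(K)_n` discrete.  Then for each `n ≥ 0` the
suspension of `Δ(K)_n` splits: there is a homotopy equivalence
`Σ(Δ(K)_n) → ⋁_{0 ≤ r ≤ n} ⋁_J Σ(ŝ_J(Δ(K)_{n−r}))`, where `J` ranges over all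
admissible sequences with `|J| = r`. -/
theorem DeltaK_suspension_splitting {m : ℕ} (K : AbsSimplicialComplex m) (n : ℕ) :
    ∃ H : C((Susp (plusP ((DeltaK K).X n))).carrier,
        (Wedge fun p : Σ r : Fin (n + 1), AdmSeq ↑r n =>
          Susp ((DeltaK K).sHat p.2.val n
            (by rw [p.2.property.1]; exact Nat.lt_succ_iff.mp p.1.isLt))).carrier),
      IsHtpyEquiv H :=
  ⟨_, ((Susp.congr (DeltaK.plusEquivSHatWedge K n).toHomeomorphOfDiscrete rfl).trans
    (Susp.wedgeHomeomorph _)).toHomotopyEquiv.isHtpyEquiv⟩
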